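/- arXiv:1804.07469 — 2 statements merged into one kernel-verified Lean document; each statement's English description precedes it below -/
import Mathlib

section
/- Let λ > 0 and μ > 0, and let x : ℝ → ℝ × ℝ be a solution of the constant-mobility system, i.e. x is differentiable with x'(t) = F(x(t)) for all t, where F(z,m) = ((μ/2)·z·|z| + λ·z + 2·m, −μ·m·|z| − μ·z). If x is periodic with some period T > 0 (x(t + T) = x(t) for all t) and x is not constant, then a contradiction follows; equivalently, every periodic solution of the constant-mobility system is constant. -/
/-!
Writing `x = (z, m)` and `p = z'`, eliminating `m` turns the system into the damped Newton
equation `z'' = λ z' + V'(z)` with `V(w) = μ²w⁴/8 + λμ|w|³/3 - μw²`. Along a solution the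
energy `p²/2 - V(z)` therefore has derivative `λ p² ≥ 0`; being periodic and nondecreasing it is
constant, so `p = 0`. Hence `z` is constant, and `p = 0` then pins down `m` as a function of `z`.
-/

open Topology

section ProdDeriv

variable {𝕜 E F : Type*} [NontriviallyNormedField 𝕜] [NormedAddCommGroup E] [NormedSpace 𝕜 E]
  [NormedAddCommGroup F] [NormedSpace 𝕜 F] {f : 𝕜 → E × F} {v : E × F} {t : 𝕜}

theorem HasDerivAt.fst (h : HasDerivAt f v t) : HasDerivAt (fun s => (f s).1) v.1 t := by
  simpa using h.hasFDerivAt.fst.hasDerivAt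

theorem HasDerivAt.snd (h : HasDerivAt f v t) : HasDerivAt (fun s => (f s).2) v.2 t := by
  simpa using h.hasFDerivAt.snd.hasDerivAt

end ProdDeriv

theorem hasDerivAt_mul_abs_self (a : ℝ) : HasDerivAt (fun w : ℝ => w * |w|) (2 * |a|) a := by
  rcases eq_or_ne a 0 with rfl | ha
  · rw [hasDerivAt_iff_tendsto_slope_zero]
    have hslope : ∀ᶠ h in 𝓝[≠] (0 : ℝ), |h| = h⁻¹ • ((0 + h) * |0 + h| - 0 * |0|) := by
      filter_upwards [self_mem_nhdsWithin] with h (hh : h ≠ 0)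
      rw [zero_add, zero_mul, sub_zero, smul_eq_mul, inv_mul_cancel_left₀ hh]
    simpa using (continuous_abs.tendsto' 0 0 abs_zero).mono_left nhdsWithin_le_nhds
      |>.congr' hslope
  · refine ((hasDerivAt_id' a).mul (hasDerivAt_abs ha)).congr_deriv ?_
    rw [self_mul_sign]
    ring

theorem Function.Periodic.eq_of_monotone {α β : Type*} [AddCommGroup α] [LinearOrder α]
    [IsOrderedAddMonoid α] [Archimedean α] [PartialOrder β] {f : α → β} {c : α}
    (hf : Function.Periodic f c) (hc : 0 < c) (hmono : Monotone f) (s t : α) : f s = f t := by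
  wlog hst : s ≤ t generalizing s t
  · exact (this t s (le_of_not_ge hst)).symm
  obtain ⟨n, hn⟩ := Archimedean.arch (t - s) hc
  refine le_antisymm (hmono hst) ?_
  calc f t ≤ f (s + n • c) := hmono (sub_le_iff_le_add'.mp hn)
    _ = f s := hf.nsmul n s

theorem Function.Periodic.hasDerivAt_eq_zero_of_nonneg {f f' : ℝ → ℝ} {c : ℝ}
    (hf : Function.Periodic f c) (hc : 0 < c) (hderiv : ∀ t, HasDerivAt f (f' t) t)
    (hnonneg : ∀ t, 0 ≤ f' t) (t : ℝ) : f' t = 0 := by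
  have hconst : f = fun _ => f 0 :=
    funext (hf.eq_of_monotone hc (monotone_of_hasDerivAt_nonneg hderiv hnonneg) · 0)
  exact (hderiv t).unique (hconst ▸ hasDerivAt_const t (f 0))

theorem hasDerivAt_damped_energy {z p V : ℝ → ℝ} {c V' t : ℝ} (hz : HasDerivAt z (p t) t)
    (hp : HasDerivAt p (c * p t + V') t) (hV : HasDerivAt V V' (z t)) :
    HasDerivAt (fun s => p s ^ 2 / 2 - V (z s)) (c * p t ^ 2) t := by
  refine (((hp.pow 2).div_const 2).sub (hV.comp t hz)).congr_deriv ?_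
  ring

namespace ConstantMobility

variable (lam mu : ℝ)

noncomputable def field (v : ℝ × ℝ) : ℝ × ℝ :=
  ((mu / 2) * v.1 * |v.1| + lam * v.1 + 2 * v.2, -(mu * v.2 * |v.1|) - mu * v.1)

noncomputable def potential (w : ℝ) : ℝ :=
  mu ^ 2 / 8 * w ^ 4 + lam * mu / 3 * (w * (w * |w|)) - mu * w ^ 2

theorem hasDerivAt_potential (w : ℝ) :
    HasDerivAt (potential lam mu)
      (mu ^ 2 / 2 * w ^ 3 + lam * mu * (w * |w|) - 2 * mu * w) w := by
  have hcube := (hasDerivAt_id' w).mul (hasDerivAt_mul_abs_self w)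
  refine ((((hasDerivAt_pow 4 w).const_mul (mu ^ 2 / 8)).add
    (hcube.const_mul (lam * mu / 3))).sub ((hasDerivAt_pow 2 w).const_mul mu)).congr_deriv ?_
  have habs : w * |w| * w = w * w * |w| := by ring
  push_cast
  linear_combination (lam * mu / 3) * habs

variable {lam mu}

theorem hasDerivAt_field_fst {x : ℝ → ℝ × ℝ} {t : ℝ}
    (hx : HasDerivAt x (field lam mu (x t)) t) :
    HasDerivAt (fun s => (field lam mu (x s)).1)
      (lam * (field lam mu (x t)).1 + (mu ^ 2 / 2 * (x t).1 ^ 3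
        + lam * mu * ((x t).1 * |(x t).1|) - 2 * mu * (x t).1)) t := by
  have h := ((((hasDerivAt_mul_abs_self _).comp t hx.fst).const_mul (mu / 2)).add
    (hx.fst.const_mul lam)).add (hx.snd.const_mul 2)
  refine (h.congr_deriv ?_).congr_of_eventuallyEq (.of_forall fun s => ?_)
  · simp only [field]
    linear_combination (mu ^ 2 / 2 * (x t).1) * abs_mul_abs_self (x t).1
  · simp only [field, Pi.add_apply, Function.comp_apply]
    ring

theorem hasDerivAt_energy {x : ℝ → ℝ × ℝ} {t : ℝ}
    (hx : HasDerivAt x (field lam mu (x t)) t) :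
    HasDerivAt (fun s => (field lam mu (x s)).1 ^ 2 / 2 - potential lam mu (x s).1)
      (lam * (field lam mu (x t)).1 ^ 2) t :=
  hasDerivAt_damped_energy hx.fst (hasDerivAt_field_fst hx) (hasDerivAt_potential lam mu _)

theorem snd_eq_of_field_fst_eq_zero {v : ℝ × ℝ} (h : (field lam mu v).1 = 0) :
    v.2 = -(mu / 2 * v.1 * |v.1| + lam * v.1) / 2 := by
  unfold field at h
  linear_combination h / 2

end ConstantMobility

theorem constant_mobility_no_periodic_orbits_general (lam mu : ℝ) (hlam : 0 < lam)
    (x : ℝ → ℝ × ℝ)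
    (hx : ∀ t : ℝ, HasDerivAt x
      ((mu / 2) * (x t).1 * |(x t).1| + lam * (x t).1 + 2 * (x t).2,
        -(mu * (x t).2 * |(x t).1|) - mu * (x t).1) t)
    (T : ℝ) (hT : 0 < T) (hper : ∀ t : ℝ, x (t + T) = x t) :
    ∀ s t : ℝ, x s = x t := by
  open ConstantMobility in
  have hE (t : ℝ) := hasDerivAt_energy (hx t)
  have hEper : Function.Periodic
      (fun s => (field lam mu (x s)).1 ^ 2 / 2 - potential lam mu (x s).1) T :=
    fun t => by simp only [hper t]
  have hp (t : ℝ) : (field lam mu (x t)).1 = 0 := by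
    simpa [hlam.ne'] using hEper.hasDerivAt_eq_zero_of_nonneg hT hE (fun t => by positivity) t
  have hz : ∀ s t, (x s).1 = (x t).1 := is_const_of_deriv_eq_zero
    (fun t => (hx t).fst.differentiableAt) (fun t => (hx t).fst.deriv.trans (hp t))
  exact fun s t => Prod.ext (hz s t) (by
    rw [snd_eq_of_field_fst_eq_zero (hp s), snd_eq_of_field_fst_eq_zero (hp t), hz s t])

/-- Every periodic solution of the constant-mobility system is constant: if
`x' = F(x)` with `F(z,m) = ((μ/2)·z·|z| + λ·z + 2·m, −μ·m·|z| − μ·z)` and `x` has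
period `T > 0`, then `x` is constant. -/
theorem constant_mobility_no_periodic_orbits (lam mu : ℝ) (hlam : 0 < lam) (hmu : 0 < mu)
    (x : ℝ → ℝ × ℝ)
    (hx : ∀ t : ℝ, HasDerivAt x
      ((mu / 2) * (x t).1 * |(x t).1| + lam * (x t).1 + 2 * (x t).2,
        -(mu * (x t).2 * |(x t).1|) - mu * (x t).1) t)
    (T : ℝ) (hT : 0 < T) (hper : ∀ t : ℝ, x (t + T) = x t) :
    ∀ s t : ℝ, x s = x t :=
  constant_mobility_no_periodic_orbits_general lam mu hlam x hx T hT hper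
end

section
/- Let λ > 0, μ > 0, ε ∈ [0,1), and set z₁ = (√(λ² + 4μ(1−ε)) − λ)/(μ(1−ε)). The crowding vector field G(z,m) = ((μ/2)·z·|z| + (μ·ε·m/2)·z² + λ·z + 2·m, −(1+ε)·μ·m·|z| − μ·(1 + ε·m²)·z) is Fréchet differentiable at the fixed point Q = (z₁, −1), its derivative is represented by the matrix [[μ(1−ε)·z₁ + λ, (μ·ε/2)·z₁² + 2], [0, (ε−1)·μ·z₁]], and the determinant of this matrix, (μ(1−ε)·z₁ + λ)·(ε−1)·μ·z₁, is strictly negative; hence the matrix has one strictly positive and one strictly negative real eigenvalue and Q is a saddle point. -/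
/-!
Since `z₁ > 0`, the field agrees near `Q = (z₁, -1)` with the polynomial field obtained by
replacing `|z|` with `z`, so it is differentiable there. At `m = -1` the `∂/∂z` entry of the
second component vanishes, so the Jacobian is upper triangular and its eigenvalues are its
diagonal entries `μ(1-ε)z₁ + λ > 0` and `(ε-1)μz₁ < 0`.
-/

open Module ContinuousLinearMap

theorem Matrix.IsUpperTriangular.hasEigenvalue_toLin'_diag {R n : Type*} [CommRing R]
    [IsDomain R] [Fintype n] [DecidableEq n] [LinearOrder n] {M : Matrix n n R}
    (hM : M.IsUpperTriangular) (i : n) : End.HasEigenvalue M.toLin' (M i i) := by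
  rw [End.hasEigenvalue_iff_isRoot_charpoly, Matrix.charpoly_toLin',
    Matrix.charpoly_of_isUpperTriangular M hM, Polynomial.IsRoot, Polynomial.eval_prod]
  exact Finset.prod_eq_zero (Finset.mem_univ i) (by simp)

theorem Matrix.isUpperTriangular_fin_two_of {R : Type*} [CommRing R] (a b d : R) :
    (!![a, b; 0, d] : Matrix (Fin 2) (Fin 2) R).IsUpperTriangular := by
  intro i j hji
  fin_cases i <;> fin_cases j <;> simp_all

theorem lt_sqrt_sq_add {b c : ℝ} (hc : 0 < c) : b < √(b ^ 2 + c) := by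
  calc b ≤ |b| := le_abs_self b
    _ = √(b ^ 2) := (Real.sqrt_sq_eq_abs b).symm
    _ < √(b ^ 2 + c) := Real.sqrt_lt_sqrt (sq_nonneg b) (lt_add_of_pos_right _ hc)

noncomputable def matrixCLM (a b c d : ℝ) : ℝ × ℝ →L[ℝ] ℝ × ℝ :=
  (a • fst ℝ ℝ ℝ + b • snd ℝ ℝ ℝ).prod (c • fst ℝ ℝ ℝ + d • snd ℝ ℝ ℝ)

@[simp]
theorem matrixCLM_apply (a b c d : ℝ) (v : ℝ × ℝ) :
    matrixCLM a b c d v = (a * v.1 + b * v.2, c * v.1 + d * v.2) := rfl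

section CrowdingField

variable (lam mu eps : ℝ)

noncomputable def crowdingField (p : ℝ × ℝ) : ℝ × ℝ :=
  ((mu / 2) * p.1 * |p.1| + (mu * eps * p.2 / 2) * p.1 ^ 2 + lam * p.1 + 2 * p.2,
    -((1 + eps) * mu * p.2 * |p.1|) - mu * (1 + eps * p.2 ^ 2) * p.1)

theorem hasFDerivAt_crowdingField {z : ℝ} (hz : 0 < z) (m : ℝ) :
    HasFDerivAt (crowdingField lam mu eps)
      (matrixCLM (mu * z + mu * eps * m * z + lam) (mu * eps / 2 * z ^ 2 + 2)
        (-((1 + eps) * mu * m) - mu * (1 + eps * m ^ 2))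
        (-((1 + eps) * mu * z) - 2 * mu * eps * m * z))
      (z, m) := by
  have h1 : HasFDerivAt (fun p : ℝ × ℝ => p.1) (fst ℝ ℝ ℝ) (z, m) := hasFDerivAt_fst
  have h2 : HasFDerivAt (fun p : ℝ × ℝ => p.2) (snd ℝ ℝ ℝ) (z, m) := hasFDerivAt_snd
  have hpoly := (((((h1.const_mul (mu / 2)).mul h1).add
      ((h2.const_mul (mu * eps / 2)).mul (h1.pow 2))).add (h1.const_mul lam)).add
      (h2.const_mul 2)).prodMk
    (((h2.const_mul ((1 + eps) * mu)).mul h1).neg.sub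
      ((((h2.pow 2).const_mul eps).const_add 1 |>.const_mul mu).mul h1))
  refine (hpoly.congr_of_eventuallyEq ?_).congr_fderiv ?_
  · filter_upwards [isOpen_lt continuous_const continuous_fst |>.mem_nhds hz] with p hp
    simp only [crowdingField, abs_of_pos (show 0 < p.1 from hp), Pi.add_apply, Pi.mul_apply,
      Pi.neg_apply, Pi.sub_apply]
    ring_nf
  · ext <;> simp <;> ring

end CrowdingField

/-- The crowding vector field is Fréchet differentiable at the fixed point
`Q = (z₁, −1)` with `z₁ = (√(λ² + 4μ(1−ε)) − λ)/(μ(1−ε))`, with derivative represented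
by the matrix `[[μ(1−ε)z₁ + λ, (με/2)z₁² + 2], [0, (ε−1)μz₁]]`, whose determinant
`(μ(1−ε)z₁ + λ)·(ε−1)·μ·z₁` is strictly negative; hence it has one strictly positive
and one strictly negative real eigenvalue and `Q` is a saddle point. -/
theorem crowding_saddle_Q (lam mu eps : ℝ) (hlam : 0 < lam) (hmu : 0 < mu)
    (heps : eps ∈ Set.Ico (0 : ℝ) 1) :
    let z₁ : ℝ := (Real.sqrt (lam ^ 2 + 4 * mu * (1 - eps)) - lam) / (mu * (1 - eps))
    let G : ℝ × ℝ → ℝ × ℝ := fun p =>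
      ((mu / 2) * p.1 * |p.1| + (mu * eps * p.2 / 2) * p.1 ^ 2 + lam * p.1 + 2 * p.2,
        -((1 + eps) * mu * p.2 * |p.1|) - mu * (1 + eps * p.2 ^ 2) * p.1)
    let A : Matrix (Fin 2) (Fin 2) ℝ :=
      !![mu * (1 - eps) * z₁ + lam, (mu * eps / 2) * z₁ ^ 2 + 2; 0, (eps - 1) * mu * z₁]
    ∃ L : ℝ × ℝ →L[ℝ] ℝ × ℝ,
      HasFDerivAt G L (z₁, -1) ∧
      (∀ v : ℝ × ℝ, L v = (A 0 0 * v.1 + A 0 1 * v.2, A 1 0 * v.1 + A 1 1 * v.2)) ∧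
      A.det = (mu * (1 - eps) * z₁ + lam) * ((eps - 1) * mu * z₁) ∧
      A.det < 0 ∧
      Module.End.HasEigenvalue (Matrix.toLin' A) (mu * (1 - eps) * z₁ + lam) ∧
      0 < mu * (1 - eps) * z₁ + lam ∧
      Module.End.HasEigenvalue (Matrix.toLin' A) ((eps - 1) * mu * z₁) ∧
      (eps - 1) * mu * z₁ < 0 := by
  intro z₁ G A
  have heps' : 0 < 1 - eps := sub_pos.2 heps.2
  have hz₁ : 0 < z₁ := div_pos (sub_pos.2 (lt_sqrt_sq_add (by positivity))) (by positivity)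
  have hpos : 0 < mu * (1 - eps) * z₁ + lam := by positivity
  have hneg : (eps - 1) * mu * z₁ < 0 :=
    mul_neg_of_neg_of_pos (mul_neg_of_neg_of_pos (sub_neg.2 heps.2) hmu) hz₁
  have hdet : A.det = (mu * (1 - eps) * z₁ + lam) * ((eps - 1) * mu * z₁) :=
    (Matrix.det_fin_two_of _ _ _ _).trans (by ring)
  have hA : A.IsUpperTriangular := Matrix.isUpperTriangular_fin_two_of _ _ _
  refine ⟨_, hasFDerivAt_crowdingField lam mu eps hz₁ (-1), fun v => ?_, hdet,
    hdet ▸ mul_neg_of_pos_of_neg hpos hneg, hA.hasEigenvalue_toLin'_diag 0, hpos,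
    hA.hasEigenvalue_toLin'_diag 1, hneg⟩
  simp only [matrixCLM_apply, A, Matrix.of_apply, Matrix.cons_val', Matrix.cons_val_zero,
    Matrix.cons_val_one, Matrix.empty_val', Matrix.cons_val_fin_one, Prod.mk.injEq]
  constructor <;> ring
end
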